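/- arXiv:2508.03432 — 5 statements merged into one kernel-verified Lean document; each statement's English description precedes it below -/
import Mathlib

section
/- In a subtraction algebra, the operation a ∧ b := a − (a − b) makes the underlying set a meet-semilattice, where the order is defined by a ≤ b iff a ∧ b = a. -/
theorem subtraction_algebra_meet_semilattice {A : Type*} (sub : A → A → A)
    (ax1 : ∀ a b, sub a (sub b a) = a)
    (ax2 : ∀ a b, sub a (sub a b) = sub b (sub b a))
    (ax3 : ∀ a b c, sub (sub a b) c = sub (sub a c) b) :
    let m : A → A → A := fun a b => sub a (sub a b)
    let le : A → A → Prop := fun a b => m a b = a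
    (∀ a, le a a) ∧
    (∀ a b, le a b → le b a → a = b) ∧
    (∀ a b c, le a b → le b c → le a c) ∧
    (∀ a b, le (m a b) a) ∧
    (∀ a b, le (m a b) b) ∧
    (∀ a b c, le c a → le c b → le c (m a b)) := by
  intro m le
  have zeq : ∀ a b, sub a a = sub b b := fun a b =>
    (Trans.trans (Trans.trans (Trans.trans (Trans.trans (Trans.trans (Trans.trans (Trans.trans
      (Trans.trans (Trans.trans (congrArg (sub a) (ax1 a b).symm) (ax2 a (sub b a)))
      (congrArg (sub (sub b a)) (congrArg (sub (sub b a)) (ax1 a b).symm)))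
      (congrArg (sub (sub b a)) (ax1 (sub b a) a)))
      (congrArg (sub (sub b a)) (congrArg (fun w => sub w a) (ax1 b b).symm)))
      (congrArg (sub (sub b a)) (ax3 b (sub b b) a))) (ax2 (sub b a) (sub b b)))
      (ax3 b b (sub (sub b b) (sub b a))))
      (congrArg (fun w => sub w b) (congrArg (sub b) (ax3 b b (sub b a)))))
      (congrArg (fun w => sub w b) (ax1 b (sub b (sub b a)))))
  have p1 : ∀ a b, sub a (sub b b) = a := fun a b =>
    (congrArg (sub a) (zeq b a)).trans (ax1 a a)
  have p2 : ∀ a b, sub (sub b b) a = sub b b := fun a b =>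
    ((congrArg (fun w => sub w a) (zeq b a)).trans
      ((congrArg (sub (sub a a)) (p1 a a).symm).trans (ax1 (sub a a) a))).trans (zeq a b)
  -- le a b → sub a b is "zero"
  have le_zero : ∀ a b, le a b → sub a b = sub b b := by
    intro a b h
    have h' : sub a (sub a b) = a := h
    calc sub a b = sub (sub a (sub a b)) b := (congrArg (fun w => sub w b) h').symm
    _ = sub (sub a b) (sub a b) := ax3 a (sub a b) b
    _ = sub b b := zeq (sub a b) b
  have zero_le : ∀ a b, sub a b = sub b b → le a b := by
    intro a b h
    show sub a (sub a b) = a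
    rw [h]; exact p1 a b
  refine ⟨fun a => ax1 a a, ?_, ?_, ?_, ?_, ?_⟩
  · intro a b h1 h2
    exact h1.symm.trans ((ax2 a b).trans h2)
  · intro a b c hab hbc
    have h1 := le_zero a b hab
    have h2 := le_zero b c hbc
    refine zero_le a c ?_
    exact (Trans.trans (Trans.trans (Trans.trans (Trans.trans (Trans.trans
      (congrArg (fun w => sub w c) (p1 a b).symm)
      (congrArg (fun w => sub w c) (congrArg (sub a) h1.symm)))
      (congrArg (fun w => sub w c) (ax2 a b))) (ax3 b (sub b a) c))
      (congrArg (fun w => sub w (sub b a)) h2)) (p2 (sub b a) c))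
  · intro a b
    refine zero_le _ a ?_
    calc sub (sub a (sub a b)) a = sub (sub a a) (sub a b) := ax3 a (sub a b) a
    _ = sub a a := p2 (sub a b) a
  · intro a b
    refine zero_le _ b ?_
    calc sub (sub a (sub a b)) b = sub (sub a b) (sub a b) := ax3 a (sub a b) b
    _ = sub b b := zeq (sub a b) b
  · intro a b c hca hcb
    have h1 := le_zero c a hca
    have h2 := le_zero c b hcb
    refine zero_le c (sub a (sub a b)) ?_
    refine Eq.trans ?_ (zeq b (sub a (sub a b)))
    exact (Trans.trans (Trans.trans (Trans.trans (Trans.trans (Trans.trans (Trans.trans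
      (Trans.trans (Trans.trans (Trans.trans (Trans.trans (Trans.trans
      (congrArg (fun w => sub w (sub a (sub a b))) (p1 c a).symm)
      (congrArg (fun w => sub w (sub a (sub a b))) (congrArg (sub c) h1.symm)))
      (congrArg (fun w => sub w (sub a (sub a b))) (ax2 c a)))
      (ax3 a (sub a c) (sub a (sub a b))))
      (congrArg (fun w => sub w (sub a c)) (ax2 a (sub a b))))
      (congrArg (fun w => sub w (sub a c)) (ax3 a b (sub (sub a b) a))))
      (congrArg (fun w => sub w (sub a c)) (congrArg (fun w => sub w b) (ax1 a (sub a b)))))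
      (ax3 a b (sub a c))) (congrArg (fun w => sub w b) (ax2 a c)))
      (congrArg (fun w => sub w b) (congrArg (sub c) h1)))
      (congrArg (fun w => sub w b) (p1 c a))) h2)
end

section
/- In a subtraction algebra with least element 0 (i.e., a − a is a constant 0), for each element a the downset a↓ = {x : x ≤ a} is a Boolean algebra with meet a ∧ b := a − (a − b), join b ∨ c := a − ((a − b) − c) for b, c ≤ a, top element a, bottom 0, and complement of z given by a − z. -/
/-- In a subtraction algebra with least element `0`, each downset `a↓` is a Boolean
algebra with meet `b ∧ c = b − (b − c)`, join `b ∨ c = a − ((a − b) − c)`,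
top `a`, bottom `0`, and complement `z ↦ a − z`. -/
theorem subtraction_algebra_downset_boolean {A : Type*} (sub : A → A → A) (zero : A)
    (ax1 : ∀ a b, sub a (sub b a) = a)
    (ax2 : ∀ a b, sub a (sub a b) = sub b (sub b a))
    (ax3 : ∀ a b c, sub (sub a b) c = sub (sub a c) b)
    (hzero : ∀ a, sub a a = zero)
    (a : A) :
    let m : A → A → A := fun b c => sub b (sub b c)
    let le : A → A → Prop := fun b c => sub b c = zero
    let j : A → A → A := fun b c => sub a (sub (sub a b) c)
    -- closure of the operations on the downset
    (∀ b c, le b a → le c a → le (m b c) a ∧ le (j b c) a) ∧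
    (∀ z, le z a → le (sub a z) a) ∧
    -- `j` is the join (least upper bound) in the downset
    (∀ b c, le b a → le c a → le b (j b c) ∧ le c (j b c) ∧
      ∀ e, le e a → le b e → le c e → le (j b c) e) ∧
    -- `m` is the meet (greatest lower bound)
    (∀ b c, le b a → le c a → le (m b c) b ∧ le (m b c) c ∧
      ∀ e, le e a → le e b → le e c → le e (m b c)) ∧
    -- distributivity
    (∀ b c d, le b a → le c a → le d a → m b (j c d) = j (m b c) (m b d)) ∧
    -- top and bottom
    (∀ b, le b a → m b a = b ∧ m b zero = zero) ∧
    -- complementation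
    (∀ z, le z a → m z (sub a z) = zero ∧ j z (sub a z) = a) := by
  intro m le j
  -- basic lemmas
  have H1 : ∀ x, sub x zero = x := by
    intro x; have h := ax1 x x; rwa [hzero] at h
  have H2 : ∀ x, sub zero x = zero := by
    intro x; have h := ax1 zero x; rwa [H1] at h
  -- x − y ≤ x
  have H3 : ∀ x y, sub (sub x y) x = zero := by
    intro x y; rw [ax3, hzero, H2]
  -- antisymmetry
  have H4 : ∀ x y, sub x y = zero → sub y x = zero → x = y := by
    intro x y h1 h2
    calc x = sub x (sub x y) := by rw [h1, H1]
      _ = sub y (sub y x) := ax2 x y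
      _ = y := by rw [h2, H1]
  -- x ∧ y ≤ y
  have H5 : ∀ x y, sub (sub x (sub x y)) y = zero := by
    intro x y; rw [ax2, ax3, hzero, H2]
  -- x ≤ y → x = y − (y − x)
  have H6 : ∀ x y, sub x y = zero → x = sub y (sub y x) := by
    intro x y h; rw [← ax2, h, H1]
  -- monotonicity in the first argument
  have H7 : ∀ x y z, sub x y = zero → sub (sub x z) (sub y z) = zero := by
    intro x y z h
    calc sub (sub x z) (sub y z)
        = sub (sub (sub y (sub y x)) z) (sub y z) := by rw [← H6 x y h]
      _ = sub (sub (sub y z) (sub y x)) (sub y z) := by rw [ax3 y (sub y x) z]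
      _ = sub (sub (sub y z) (sub y z)) (sub y x) := by rw [ax3]
      _ = zero := by rw [hzero, H2]
  -- antitonicity in the second argument
  have H8 : ∀ x y z, sub x y = zero → sub (sub z y) (sub z x) = zero := by
    intro x y z h
    calc sub (sub z y) (sub z x)
        = sub (sub z (sub z x)) y := ax3 z y (sub z x)
      _ = sub (sub x (sub x z)) y := by rw [ax2]
      _ = sub (sub x y) (sub x z) := ax3 x (sub x z) y
      _ = zero := by rw [h, H2]
  -- transitivity
  have H9 : ∀ x y z, sub x y = zero → sub y z = zero → sub x z = zero := by
    intro x y z hxy hyz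
    calc sub x z = sub (sub y (sub y x)) z := by rw [← H6 x y hxy]
      _ = sub (sub y z) (sub y x) := ax3 y (sub y x) z
      _ = zero := by rw [hyz, H2]
  -- glb property of the meet
  have H10 : ∀ x y e, sub e x = zero → sub e y = zero →
      sub e (sub x (sub x y)) = zero := by
    intro x y e hex hey
    have h1 : sub (sub x y) (sub x e) = zero := H8 e y x hey
    have h2 : sub (sub x (sub x e)) (sub x (sub x y)) = zero := H8 _ _ x h1
    rwa [← H6 e x hex] at h2
  -- (x − y) − y = x − y
  have H11 : ∀ x y, sub (sub x y) y = sub x y := by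
    intro x y
    refine H4 _ _ (H3 (sub x y) y) ?_
    calc sub (sub x y) (sub (sub x y) y)
        = sub y (sub y (sub x y)) := ax2 (sub x y) y
      _ = sub y y := by rw [ax1 y x]
      _ = zero := hzero y
  -- disjointness: w ≤ y and w ≤ x − y imply w = 0
  have H13 : ∀ w x y, sub w y = zero → sub w (sub x y) = zero → w = zero := by
    intro w x y hwy hw2
    calc w = sub y (sub y w) := H6 w y hwy
      _ = sub (sub y (sub x y)) (sub y w) := by rw [ax1 y x]
      _ = sub (sub y (sub y w)) (sub x y) := (ax3 y (sub y w) (sub x y)).symm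
      _ = sub w (sub x y) := by rw [← H6 w y hwy]
      _ = zero := hw2
  -- w ≤ x − v implies w − v = w
  have H14 : ∀ w x v, sub w (sub x v) = zero → sub w v = w := by
    intro w x v hw
    have h := H6 w (sub x v) hw
    calc sub w v
        = sub (sub (sub x v) (sub (sub x v) w)) v := by rw [← h]
      _ = sub (sub (sub x v) v) (sub (sub x v) w) := ax3 (sub x v) (sub (sub x v) w) v
      _ = sub (sub x v) (sub (sub x v) w) := by rw [H11]
      _ = w := h.symm
  -- w ≤ a and w − v = w imply w ≤ a − v
  have H16 : ∀ w v, sub w a = zero → sub w v = w → sub w (sub a v) = zero := by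
    intro w v hwa hwv
    have ht_w : sub (sub w (sub a v)) w = zero := H3 w (sub a v)
    have ht_v : sub (sub w (sub a v)) v = zero :=
      H9 _ (sub a (sub a v)) v (H7 w a (sub a v) hwa) (H5 a v)
    exact H13 (sub w (sub a v)) w v ht_v (by rw [hwv]; exact ht_w)
  -- join: b ≤ j b c
  have Hjoin1 : ∀ b c, sub b a = zero →
      sub b (sub a (sub (sub a b) c)) = zero := by
    intro b c hb
    have h1 : sub (sub (sub a b) c) (sub a b) = zero := H3 (sub a b) c
    have h2 : sub (sub a (sub a b)) (sub a (sub (sub a b) c)) = zero := H8 _ _ a h1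
    rwa [← H6 b a hb] at h2
  -- join: c ≤ j b c
  have Hjoin2 : ∀ b c, sub c a = zero →
      sub c (sub a (sub (sub a b) c)) = zero := by
    intro b c hc
    have h1 : sub (sub (sub a b) c) (sub a c) = zero := H7 (sub a b) a c (H3 a b)
    have h2 : sub (sub a (sub a c)) (sub a (sub (sub a b) c)) = zero := H8 _ _ a h1
    rwa [← H6 c a hc] at h2
  -- join: least upper bound
  have Hlub : ∀ b c e, sub b e = zero → sub c e = zero → sub e a = zero →
      sub (sub a (sub (sub a b) c)) e = zero := by
    intro b c e hbe hce hea
    have h1 : sub (sub a e) (sub a b) = zero := H8 b e a hbe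
    have h2 : sub (sub (sub a e) c) (sub (sub a b) c) = zero := H7 _ _ c h1
    have h3 : sub (sub (sub a e) (sub (sub a b) c))
        (sub (sub a e) (sub (sub a e) c)) = zero := H8 _ _ (sub a e) h2
    have h4 : sub (sub (sub a e) (sub (sub a e) c)) c = zero := H5 (sub a e) c
    have h5 : sub (sub (sub a e) (sub (sub a b) c)) e = zero :=
      H9 _ _ e (H9 _ _ c h3 h4) hce
    have h6 : sub (sub (sub a e) (sub (sub a b) c)) (sub a e) = zero :=
      H3 (sub a e) _
    have h7 : sub (sub a e) (sub (sub a b) c) = zero :=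
      H13 _ a e h5 h6
    calc sub (sub a (sub (sub a b) c)) e
        = sub (sub a e) (sub (sub a b) c) := ax3 a (sub (sub a b) c) e
      _ = zero := h7
  refine ⟨?_, ?_, ?_, ?_, ?_, ?_, ?_⟩
  · -- closure
    intro b c hb hc
    exact ⟨H9 _ b a (H3 b (sub b c)) hb, H3 a _⟩
  · -- closure of complement
    intro z _
    exact H3 a z
  · -- join is lub
    intro b c hb hc
    exact ⟨Hjoin1 b c hb, Hjoin2 b c hc, fun e hea hbe hce => Hlub b c e hbe hce hea⟩
  · -- meet is glb
    intro b c hb hc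
    exact ⟨H3 b _, H5 b c, fun e _ heb hec => H10 b c e heb hec⟩
  · -- distributivity
    intro b c d hb hc hd
    set L := sub b (sub b (sub a (sub (sub a c) d))) with hL
    set R := sub a (sub (sub a (sub b (sub b c))) (sub b (sub b d))) with hR
    show L = R
    have hmcba : sub (sub b (sub b c)) a = zero := H9 _ b a (H3 b _) hb
    have hmdba : sub (sub b (sub b d)) a = zero := H9 _ b a (H3 b _) hb
    have hmcR : sub (sub b (sub b c)) R = zero :=
      Hjoin1 (sub b (sub b c)) (sub b (sub b d)) hmcba
    have hmdR : sub (sub b (sub b d)) R = zero :=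
      Hjoin2 (sub b (sub b c)) (sub b (sub b d)) hmdba
    have hLb : sub L b = zero := H3 b _
    have hLa : sub L a = zero := H9 _ b a hLb hb
    have hLj : sub L (sub a (sub (sub a c) d)) = zero := H5 b _
    refine H4 L R ?_ ?_
    · -- L ≤ R
      -- Step 1: (L − c) − d = 0
      have hwcd : sub (sub L c) d = zero := by
        have t1 : sub (sub (sub L c) d) (sub (sub a c) d) = zero :=
          H7 _ _ d (H7 L a c hLa)
        have t2 : sub (sub (sub L c) d) L = zero :=
          H9 _ (sub L c) L (H3 (sub L c) d) (H3 L c)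
        have t3 : sub (sub (sub L c) d) (sub a (sub (sub a c) d)) = zero :=
          H9 _ L _ t2 hLj
        exact H13 _ a (sub (sub a c) d) t1 t3
      -- Step 2: set p, q, v'
      set p := sub L (sub L c) with hp
      set q := sub L (sub L d) with hq
      set v' := sub (sub a p) q with hv'
      set t := sub L (sub L v') with ht
      have ht_L : sub t L = zero := H3 L _
      have ht_v' : sub t v' = zero := H5 L v'
      have ht_ap : sub t (sub a p) = zero :=
        H9 t v' (sub a p) ht_v' (H3 (sub a p) q)
      have htp : sub t p = t := H14 t a p ht_ap
      have htq : sub t q = t := H14 t (sub a p) q ht_v'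
      have htc : sub t c = t := by
        have h1 : sub (sub t (sub t c)) p = zero :=
          H10 L c (sub t (sub t c)) (H9 _ t L (H3 t _) ht_L) (H5 t c)
        have h2 : sub (sub t (sub t c)) (sub t p) = zero := by
          rw [htp]; exact H3 t (sub t c)
        have h3 : sub t (sub t c) = zero := H13 _ t p h1 h2
        exact H4 (sub t c) t (H3 t c) h3
      have htd : sub t d = t := by
        have h1 : sub (sub t (sub t d)) q = zero :=
          H10 L d (sub t (sub t d)) (H9 _ t L (H3 t _) ht_L) (H5 t d)
        have h2 : sub (sub t (sub t d)) (sub t q) = zero := by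
          rw [htq]; exact H3 t (sub t d)
        have h3 : sub t (sub t d) = zero := H13 _ t q h1 h2
        exact H4 (sub t d) t (H3 t d) h3
      have ht0 : t = zero := by
        have h1 : sub (sub (sub t c) d) (sub (sub L c) d) = zero :=
          H7 _ _ d (H7 t L c ht_L)
        rw [htc, htd, hwcd, H1] at h1
        exact h1
      have hLv' : sub L v' = L := by
        refine H4 (sub L v') L (H3 L v') ?_
        rw [← ht]; exact ht0
      have hfin : sub L (sub a v') = zero := H16 L v' hLa hLv'
      -- L ≤ j p q ≤ R
      have hpc : sub p (sub b (sub b c)) = zero :=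
        H10 b c p (H9 p L b (H3 L _) hLb) (H5 L c)
      have hqd : sub q (sub b (sub b d)) = zero :=
        H10 b d q (H9 q L b (H3 L _) hLb) (H5 L d)
      have hpR : sub p R = zero := H9 p (sub b (sub b c)) R hpc hmcR
      have hqR : sub q R = zero := H9 q (sub b (sub b d)) R hqd hmdR
      have hRa : sub R a = zero := H3 a _
      have hjpqR : sub (sub a (sub (sub a p) q)) R = zero := Hlub p q R hpR hqR hRa
      exact H9 L (sub a v') R hfin (by rw [hv']; exact hjpqR)
    · -- R ≤ L
      have h1 : sub (sub b (sub b c)) L = zero :=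
        H10 b (sub a (sub (sub a c) d)) (sub b (sub b c)) (H3 b _)
          (H9 _ c _ (H5 b c) (Hjoin1 c d hc))
      have h2 : sub (sub b (sub b d)) L = zero :=
        H10 b (sub a (sub (sub a c) d)) (sub b (sub b d)) (H3 b _)
          (H9 _ d _ (H5 b d) (Hjoin2 c d hd))
      exact Hlub (sub b (sub b c)) (sub b (sub b d)) L h1 h2 hLa
  · -- top and bottom
    intro b hb
    constructor
    · show sub b (sub b a) = b
      rw [hb, H1]
    · show sub b (sub b zero) = zero
      rw [H1, hzero]
  · -- complementation
    intro z hz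
    constructor
    · show sub z (sub z (sub a z)) = zero
      rw [ax1 z a, hzero]
    · show sub a (sub (sub a z) (sub a z)) = a
      rw [hzero, H1]
end

section
/- Let A be a difference–restriction algebra in which every pair of compatible elements has a join. Then A has joins of all finite pairwise-compatible subsets; in particular, if a₁, a₂, a₃ are pairwise compatible then a₁ and a₂ ∨ a₃ are compatible. -/
structure DRA (A : Type*) where
  sub : A → A → A
  rest : A → A → A
  zero : A
  ax1 : ∀ a b, sub a (sub b a) = a
  ax2 : ∀ a b, sub a (sub a b) = sub b (sub b a)
  ax3 : ∀ a b c, sub (sub a b) c = sub (sub a c) b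
  ax4 : ∀ a b c, sub (rest a c) (sub (rest a c) (rest b c)) = rest (rest a b) c
  ax5 : ∀ a b, rest (sub a (sub a b)) a = sub a (sub a b)
  hzero : ∀ a, sub a a = zero

namespace DRA
variable {A : Type*} (D : DRA A)

def m (a b : A) : A := D.sub a (D.sub a b)
def lz (a b : A) : Prop := D.sub a b = D.zero

theorem ax4' (a b c : A) : D.m (D.rest a c) (D.rest b c) = D.rest (D.rest a b) c := D.ax4 a b c
theorem ax5' (a b : A) : D.rest (D.m a b) a = D.m a b := D.ax5 a b
theorem mcomm (a b : A) : D.m a b = D.m b a := D.ax2 a b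

theorem z0 (a : A) : D.sub a D.zero = a := by
  have h := D.ax1 a a; rwa [D.hzero] at h

theorem z1 (a : A) : D.sub D.zero a = D.zero := by
  have h := D.ax1 D.zero a; rwa [D.z0] at h

theorem mz (a b : A) : D.lz (D.m a b) b := by
  show D.sub (D.m a b) b = D.zero
  rw [show D.m a b = D.sub b (D.sub b a) from D.ax2 a b, D.ax3, D.hzero, D.z1]

theorem of_lz {a b : A} (h : D.lz a b) : D.m a b = a := by
  show D.sub a (D.sub a b) = a
  rw [show D.sub a b = D.zero from h, D.z0]

theorem to_lz {a b : A} (h : D.m a b = a) : D.lz a b := by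
  have := D.mz a b; rwa [h] at this

theorem lz_refl (a : A) : D.lz a a := D.hzero a

theorem lz_zero {a : A} (h : D.lz a D.zero) : a = D.zero := by
  have := D.z0 a; rw [show D.sub a D.zero = D.zero from h] at this; exact this.symm

theorem zlz (a : A) : D.lz D.zero a := D.z1 a

theorem lz_trans {a b c : A} (h1 : D.lz a b) (h2 : D.lz b c) : D.lz a c := by
  have ha : a = D.sub b (D.sub b a) := by
    rw [← D.ax2 a b]; exact (D.of_lz h1).symm
  show D.sub a c = D.zero
  rw [ha, D.ax3, show D.sub b c = D.zero from h2, D.z1]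

theorem lz_antisymm {a b : A} (h1 : D.lz a b) (h2 : D.lz b a) : a = b := by
  have h3 : D.m b a = a := by rw [← D.mcomm]; exact D.of_lz h1
  exact h3.symm.trans (D.of_lz h2)

theorem sub_lz (a b : A) : D.lz (D.sub a b) a := by
  show D.sub (D.sub a b) a = D.zero
  rw [D.ax3, D.hzero, D.z1]

theorem mle1 (a b : A) : D.lz (D.m a b) a := by
  rw [D.mcomm]; exact D.mz b a

theorem mono1 {a b : A} (c : A) (h : D.lz a b) : D.lz (D.sub a c) (D.sub b c) := by
  have ha : a = D.sub b (D.sub b a) := by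
    rw [← D.ax2 a b]; exact (D.of_lz h).symm
  have key : D.sub a c = D.sub (D.sub b c) (D.sub b a) := by
    conv_lhs => rw [ha]
    rw [D.ax3]
  show D.sub (D.sub a c) (D.sub b c) = D.zero
  rw [key]
  exact D.sub_lz _ _

theorem anti2 {c a : A} (b : A) (h : D.lz c a) : D.lz (D.sub b a) (D.sub b c) := by
  show D.sub (D.sub b a) (D.sub b c) = D.zero
  rw [D.ax3]
  have h5 := D.mono1 a (D.mz b c)
  rw [show D.sub c a = D.zero from h] at h5
  exact D.lz_zero h5

theorem glb {c a b : A} (h1 : D.lz c a) (h2 : D.lz c b) : D.lz c (D.m a b) := by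
  have hc : c = D.sub b (D.sub b c) := by
    rw [← D.ax2 c b]; exact (D.of_lz h2).symm
  show D.sub c (D.m a b) = D.zero
  calc D.sub c (D.m a b)
      = D.sub c (D.m b a) := by rw [D.mcomm]
    _ = D.sub (D.sub b (D.sub b c)) (D.sub b (D.sub b a)) := by rw [← hc]; rfl
    _ = D.sub (D.sub b (D.sub b (D.sub b a))) (D.sub b c) := by rw [D.ax3]
    _ = D.sub (D.m b (D.sub b a)) (D.sub b c) := rfl
    _ = D.sub (D.sub b a) (D.sub b c) := by
        rw [D.mcomm, D.of_lz (D.sub_lz b a)]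
    _ = D.zero := D.anti2 b h1

theorem mzrev (a b : A) : D.m a (D.sub b a) = D.zero := by
  show D.sub a (D.sub a (D.sub b a)) = D.zero
  rw [D.ax1, D.hzero]

theorem glb0 {w a b : A} (h1 : D.lz w a) (h2 : D.lz w b) (h3 : D.m a b = D.zero) : w = D.zero := by
  apply D.lz_zero; rw [← h3]; exact D.glb h1 h2

theorem L2 {u x v : A} (h1 : D.lz u x) (h2 : D.m u v = D.zero) : D.lz u (D.sub x v) := by
  have hu : D.sub u v = u := by
    apply D.lz_antisymm (D.sub_lz u v)
    show D.sub u (D.sub u v) = D.zero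
    exact h2
  have := D.mono1 v h1
  rwa [hu] at this

theorem lzz {v u : A} (h1 : D.lz v u) (h2 : D.m u v = D.zero) : v = D.zero := by
  have := D.of_lz h1
  rw [D.mcomm] at h2
  rw [← this, h2]

theorem upb {y u x : A} (h1 : D.lz y u) (h2 : D.lz (D.sub x y) u) : D.lz x u := by
  have h3 : D.lz (D.sub x u) u := D.lz_trans (D.anti2 x h1) h2
  have h4 : (D.sub x u) = D.zero := D.lzz h3 (D.mzrev u x)
  exact h4

theorem rr (a : A) : D.rest a a = a := by
  have h := D.ax5' a a
  rwa [D.of_lz (D.lz_refl a)] at h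

theorem rle {x a : A} (h : D.lz x a) : D.rest x a = x := by
  have hm : D.m a x = x := by rw [D.mcomm]; exact D.of_lz h
  have h5 := D.ax5' a x
  rwa [hm] at h5

theorem L0 (a c : A) : D.lz (D.rest a c) c := by
  have tc : D.rest (D.rest a c) c = D.m (D.rest a c) c := by
    rw [← D.ax4' a c c, D.rr]
  have hv2 : D.m (D.sub (D.rest a c) c) c = D.zero := by
    rw [D.mcomm]; exact D.mzrev c (D.rest a c)
  have hvt : D.rest (D.sub (D.rest a c) c) (D.rest a c) = D.sub (D.rest a c) c :=
    D.rle (D.sub_lz (D.rest a c) c)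
  have htu : D.lz (D.rest a c) (D.rest c (D.rest a c)) := by
    have h := D.ax4' a c (D.rest a c)
    rw [D.rr] at h
    have h2 := D.mz (D.rest a (D.rest a c)) (D.rest c (D.rest a c))
    rw [h] at h2
    exact h2
  have hvu : D.lz (D.sub (D.rest a c) c) (D.rest c (D.rest a c)) :=
    D.lz_trans (D.sub_lz (D.rest a c) c) htu
  have step5 : D.sub (D.rest a c) c
      = D.rest (D.rest (D.sub (D.rest a c) c) c) (D.rest a c) := by
    have h := D.ax4' (D.sub (D.rest a c) c) c (D.rest a c)
    rw [hvt] at h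
    rw [← h]
    exact (D.of_lz hvu).symm
  have step6 : D.m (D.rest (D.sub (D.rest a c) c) c) (D.m (D.rest a c) c)
      = D.rest (D.sub (D.rest a c) c) c := by
    have h := D.ax4' (D.sub (D.rest a c) c) (D.rest a c) c
    rw [hvt, tc] at h
    exact h
  have hp : D.lz (D.rest (D.sub (D.rest a c) c) c) (D.m (D.rest a c) c) :=
    D.to_lz step6
  have hpt : D.lz (D.rest (D.sub (D.rest a c) c) c) (D.rest a c) :=
    D.lz_trans hp (D.mle1 _ _)
  have hpc : D.lz (D.rest (D.sub (D.rest a c) c) c) c :=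
    D.lz_trans hp (D.mz _ _)
  have hvp : D.sub (D.rest a c) c = D.rest (D.sub (D.rest a c) c) c := by
    conv_lhs => rw [step5]
    exact D.rle hpt
  have hvc : D.lz (D.sub (D.rest a c) c) c := by rw [hvp]; exact hpc
  have : D.sub (D.rest a c) c = D.zero := by
    have h := D.of_lz hvc
    rw [hv2] at h
    exact h.symm
  exact this

theorem rge {x a : A} (h : D.lz x a) : D.rest a x = x := by
  apply D.lz_antisymm (D.L0 a x)
  apply D.to_lz
  have h4 := D.ax4' x a x
  rw [D.rr, D.rle h, D.rr] at h4
  exact h4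

theorem r0l (a : A) : D.rest D.zero a = D.zero := by
  have h := D.ax5' a D.zero
  have hm : D.m a D.zero = D.zero := by
    show D.sub a (D.sub a D.zero) = D.zero
    rw [D.z0, D.hzero]
  rwa [hm] at h

theorem r0r (a : A) : D.rest a D.zero = D.zero := D.rge (D.zlz a)

theorem mono1r {b j : A} (a : A) (h : D.lz b j) : D.lz (D.rest b a) (D.rest j a) := by
  have h4 := D.ax4' b j a
  rw [D.rle h] at h4
  exact D.to_lz h4

theorem S3 {x y a : A} (hx : D.lz x a) (hy : D.lz y a) : D.rest x y = D.m x y := by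
  have h4 := D.ax4' x y a
  rw [D.rle hx, D.rle hy, D.rle (D.lz_trans (D.L0 x y) hy)] at h4
  exact h4.symm

theorem A1 (x y z : A) : D.rest (D.rest x y) z = D.rest x (D.rest y z) := by
  have zr : D.rest z (D.rest y z) = D.rest y z := D.rge (D.L0 y z)
  have h := D.ax4' x z (D.rest y z)
  rw [zr, D.of_lz (D.L0 x (D.rest y z))] at h
  rw [h, D.S3 (D.L0 x z) (D.L0 y z), D.ax4']

theorem lcomm (x y z : A) : D.rest x (D.rest y z) = D.rest y (D.rest x z) := by
  rw [← D.A1, ← D.ax4', D.mcomm, D.ax4', D.A1]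

theorem mono2 {y a : A} (s : A) (h : D.lz y a) : D.lz (D.rest s y) (D.rest s a) := by
  have : D.rest s y = D.rest y (D.rest s a) := by
    conv_lhs => rw [← D.rle h]
    rw [D.lcomm]
  rw [this]
  exact D.L0 y (D.rest s a)

theorem C2 {d x a : A} (h : D.lz d (D.rest x a)) : D.rest x d = d := by
  have hda : D.lz d a := D.lz_trans h (D.L0 x a)
  have h1 : D.rest (D.rest x a) d = d := D.rge h
  rw [D.A1, D.rge hda] at h1
  exact h1

theorem joinzero {b c j v : A} (hbj : D.lz b j) (hcj : D.lz c j)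
    (hleast : ∀ u, D.lz b u → D.lz c u → D.lz j u)
    (hvj : D.lz v j) (hvb : D.m v b = D.zero) (hvc : D.m v c = D.zero) : v = D.zero := by
  have hb : D.lz b (D.sub j v) := D.L2 hbj (by rw [D.mcomm]; exact hvb)
  have hc : D.lz c (D.sub j v) := D.L2 hcj (by rw [D.mcomm]; exact hvc)
  have hvv : D.lz v (D.sub j v) := D.lz_trans hvj (hleast _ hb hc)
  have h := D.of_lz hvv
  rw [D.mzrev] at h
  exact h.symm

theorem jminus {b c j : A} (hbj : D.lz b j) (hcj : D.lz c j)
    (hleast : ∀ u, D.lz b u → D.lz c u → D.lz j u) : D.lz (D.sub j b) c := by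
  have hwb : D.m b (D.sub (D.sub j b) c) = D.zero :=
    D.glb0 (D.mle1 _ _) (D.lz_trans (D.mz _ _) (D.sub_lz (D.sub j b) c)) (D.mzrev b j)
  have hwc : D.m c (D.sub (D.sub j b) c) = D.zero := D.mzrev c (D.sub j b)
  have hwj : D.lz (D.sub (D.sub j b) c) j :=
    D.lz_trans (D.sub_lz _ c) (D.sub_lz j b)
  exact D.joinzero hbj hcj hleast hwj (by rw [D.mcomm]; exact hwb) (by rw [D.mcomm]; exact hwc)

theorem K3 {s x : A} (a : A) (hs : D.lz s x) :
    D.lz (D.sub (D.rest x a) (D.rest (D.sub x s) a)) (D.rest s a) := by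
  set t := D.sub x s with ht
  set S := D.rest s a with hS
  set T := D.rest t a with hT
  set X := D.rest x a with hX
  set d := D.sub X T with hd
  set h := D.sub d S with hh
  have htx : D.lz t x := by rw [ht]; exact D.sub_lz x s
  show D.sub d S = D.zero
  rw [← hh]
  -- basic order facts
  have hdX : D.lz d X := by rw [hd]; exact D.sub_lz X T
  have hhd : D.lz h d := by rw [hh]; exact D.sub_lz d S
  have hhX : D.lz h X := D.lz_trans hhd hdX
  have hXa : D.lz X a := by rw [hX]; exact D.L0 x a
  have hha : D.lz h a := D.lz_trans hhX hXa
  have hSa : D.lz S a := by rw [hS]; exact D.L0 s a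
  have hTa : D.lz T a := by rw [hT]; exact D.L0 t a
  have hsX : D.rest s X = S := by rw [hX, ← D.A1, D.rle hs]
  have htX : D.rest t X = T := by rw [hX, ← D.A1, D.rle htx]
  have hst : D.rest s t = D.zero := by
    rw [D.S3 hs htx, ht]; exact D.mzrev s x
  have hts : D.rest t s = D.zero := by
    rw [D.S3 htx hs, D.mcomm, ht]; exact D.mzrev s x
  have hXh : D.rest X h = h := D.rge hhX
  have hxh : D.rest x h = h := by
    apply D.C2 (a := a)
    rw [← hX]; exact hhX
  have hsh : D.rest s h = D.zero := by
    have e1 : D.rest s h = D.rest S h := by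
      conv_lhs => rw [← hXh]
      rw [← D.A1, hsX]
    rw [e1, D.S3 hSa hha, hh]
    exact D.mzrev S d
  have hdT : D.m d T = D.zero := by
    rw [hd, D.mcomm]; exact D.mzrev T X
  have hmhT : D.m h T = D.zero :=
    D.glb0 (D.lz_trans (D.mle1 h T) hhd) (D.mz h T) hdT
  have hth : D.rest t h = D.zero := by
    have e1 : D.rest t h = D.rest T h := by
      conv_lhs => rw [← hXh]
      rw [← D.A1, htX]
    rw [e1, D.S3 hTa hha, D.mcomm]
    exact hmhT
  -- the element rest h x is zero
  have hsx2 : D.m s (D.rest h x) = D.zero := by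
    rw [← D.S3 hs (D.L0 h x), ← D.A1, hsh, D.r0l]
  have htx2 : D.m t (D.rest h x) = D.zero := by
    rw [← D.S3 htx (D.L0 h x), ← D.A1, hth, D.r0l]
  have hsu : D.lz s (D.sub x (D.rest h x)) := D.L2 hs hsx2
  have htu : D.lz t (D.sub x (D.rest h x)) := D.L2 htx htx2
  have htu' : D.lz (D.sub x s) (D.sub x (D.rest h x)) := by rw [← ht]; exact htu
  have hxu : D.lz x (D.sub x (D.rest h x)) := D.upb hsu htu'
  have hx20 : D.rest h x = D.zero := by
    have h1 : D.lz (D.rest h x) (D.sub x (D.rest h x)) := D.lz_trans (D.L0 h x) hxu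
    have h2 := D.of_lz h1
    rw [D.mzrev] at h2
    exact h2.symm
  have e : D.rest (D.rest h x) h = h := by rw [D.A1, hxh, D.rr]
  rw [hx20, D.r0l] at e
  exact e.symm

theorem distD {s x a u : A} (hs : D.lz s x) (hSu : D.lz (D.rest s a) u)
    (hTu : D.lz (D.rest (D.sub x s) a) u) : D.lz (D.rest x a) u := by
  have hK := D.K3 a hs
  have h1 : D.lz (D.sub (D.rest x a) u) (D.sub (D.rest x a) (D.rest s a)) :=
    D.anti2 _ hSu
  have h2 : D.lz (D.sub (D.rest x a) u) (D.sub (D.rest x a) (D.rest (D.sub x s) a)) :=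
    D.anti2 _ hTu
  have hwS : D.lz (D.m (D.sub (D.rest x a) (D.rest s a)) (D.sub (D.rest x a) (D.rest (D.sub x s) a))) (D.rest s a) :=
    D.lz_trans (D.mz _ _) hK
  have hwS0 : D.m (D.m (D.sub (D.rest x a) (D.rest s a)) (D.sub (D.rest x a) (D.rest (D.sub x s) a))) (D.rest s a) = D.zero :=
    D.glb0 (D.lz_trans (D.mle1 _ _) (D.mle1 _ _)) (D.mz _ _)
      (by rw [D.mcomm]; exact D.mzrev (D.rest s a) (D.rest x a))
  have hw : D.m (D.sub (D.rest x a) (D.rest s a)) (D.sub (D.rest x a) (D.rest (D.sub x s) a)) = D.zero := by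
    have := D.of_lz hwS
    rw [hwS0] at this
    exact this.symm
  have h3 := D.glb h1 h2
  rw [hw] at h3
  have h4 := D.lz_zero h3
  exact h4

theorem G1 {b c j : A} (a : A) {u : A} (hbj : D.lz b j) (hcj : D.lz c j)
    (hleast : ∀ w, D.lz b w → D.lz c w → D.lz j w)
    (hbu : D.lz (D.rest b a) u) (hcu : D.lz (D.rest c a) u) : D.lz (D.rest j a) u := by
  have hjb : D.lz (D.sub j b) c := D.jminus hbj hcj hleast
  exact D.distD hbj hbu (D.lz_trans (D.mono1r a hjb) hcu)

theorem G2 {b c j : A} (a : A) {u : A} (hbj : D.lz b j) (hcj : D.lz c j)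
    (hleast : ∀ w, D.lz b w → D.lz c w → D.lz j w)
    (hbu : D.lz (D.rest a b) u) (hcu : D.lz (D.rest a c) u) : D.lz (D.rest a j) u := by
  have hYb : D.m (D.rest a j) b = D.rest a b := by
    rw [← D.S3 (D.L0 a j) hbj, D.A1, D.rge hbj]
  have hYc : D.m (D.rest a j) c = D.rest a c := by
    rw [← D.S3 (D.L0 a j) hcj, D.A1, D.rge hcj]
  have e1 : D.sub (D.rest a j) (D.m (D.rest a j) b) = D.sub (D.rest a j) b := by
    have h := D.of_lz (D.sub_lz (D.rest a j) b)
    rw [D.mcomm] at h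
    exact h
  have e2 : D.sub (D.rest a j) (D.m (D.rest a j) c) = D.sub (D.rest a j) c := by
    have h := D.of_lz (D.sub_lz (D.rest a j) c)
    rw [D.mcomm] at h
    exact h
  have h1 : D.lz (D.sub (D.rest a j) u) (D.sub (D.rest a j) b) := by
    rw [← e1]
    exact D.anti2 _ (by rw [hYb]; exact hbu)
  have h2 : D.lz (D.sub (D.rest a j) u) (D.sub (D.rest a j) c) := by
    rw [← e2]
    exact D.anti2 _ (by rw [hYc]; exact hcu)
  have hwj : D.lz (D.m (D.sub (D.rest a j) b) (D.sub (D.rest a j) c)) j :=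
    D.lz_trans (D.mle1 _ _) (D.lz_trans (D.sub_lz _ b) (D.L0 a j))
  have hwb : D.m (D.m (D.sub (D.rest a j) b) (D.sub (D.rest a j) c)) b = D.zero :=
    D.glb0 (D.lz_trans (D.mle1 _ _) (D.mle1 _ _)) (D.mz _ _)
      (by rw [D.mcomm]; exact D.mzrev b (D.rest a j))
  have hwc : D.m (D.m (D.sub (D.rest a j) b) (D.sub (D.rest a j) c)) c = D.zero :=
    D.glb0 (D.lz_trans (D.mle1 _ _) (D.mz _ _)) (D.mz _ _)
      (by rw [D.mcomm]; exact D.mzrev c (D.rest a j))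
  have hw0 := D.joinzero hbj hcj hleast hwj hwb hwc
  have h3 := D.glb h1 h2
  rw [hw0] at h3
  exact D.lz_zero h3

theorem core {a b c j : A} (hab : D.rest a b = D.rest b a) (hac : D.rest a c = D.rest c a)
    (hbj : D.lz b j) (hcj : D.lz c j)
    (hleast : ∀ w, D.lz b w → D.lz c w → D.lz j w) :
    D.rest a j = D.rest j a := by
  apply D.lz_antisymm
  · exact D.G2 a hbj hcj hleast
      (by rw [hab]; exact D.mono1r a hbj)
      (by rw [hac]; exact D.mono1r a hcj)
  · exact D.G1 a hbj hcj hleast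
      (by rw [← hab]; exact D.mono2 a hbj)
      (by rw [← hac]; exact D.mono2 a hcj)

end DRA

theorem dra_finite_compatible_joins {A : Type*} (sub rest : A → A → A) (zero : A)
    (ax1 : ∀ a b, sub a (sub b a) = a)
    (ax2 : ∀ a b, sub a (sub a b) = sub b (sub b a))
    (ax3 : ∀ a b c, sub (sub a b) c = sub (sub a c) b)
    (ax4 : ∀ a b c, sub (rest a c) (sub (rest a c) (rest b c)) = rest (rest a b) c)
    (ax5 : ∀ a b, rest (sub a (sub a b)) a = sub a (sub a b))
    (hzero : ∀ a, sub a a = zero)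
    (hbot : ∀ a, sub a (sub a zero) = zero) :
    let m : A → A → A := fun a b => sub a (sub a b)
    let le : A → A → Prop := fun a b => m a b = a
    let compat : A → A → Prop := fun a b => rest a b = rest b a
    let isJoin : Set A → A → Prop := fun S j =>
      (∀ s ∈ S, le s j) ∧ ∀ u, (∀ s ∈ S, le s u) → le j u
    (∀ a b : A, compat a b → ∃ j, isJoin {a, b} j) →
    ((∀ S : Finset A, (∀ a ∈ S, ∀ b ∈ S, compat a b) → ∃ j, isJoin (↑S) j) ∧
      (∀ a₁ a₂ a₃ j : A, compat a₁ a₂ → compat a₂ a₃ → compat a₁ a₃ →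
        isJoin {a₂, a₃} j → compat a₁ j)) := by
  intro m le compat isJoin hbin
  classical
  let D : DRA A := ⟨sub, rest, zero, ax1, ax2, ax3, ax4, ax5, hzero⟩
  have hof : ∀ {p q : A}, D.lz p q → le p q := fun h => D.of_lz h
  have hto : ∀ {p q : A}, le p q → D.lz p q := fun h => D.to_lz h
  -- the core compatibility lemma, in terms of the statement's notions
  have hcore : ∀ a b c j : A, compat a b → compat a c →
      le b j → le c j → (∀ u, le b u → le c u → le j u) → compat a j := by
    intro a b c j hab hac hbj hcj hleast
    exact D.core hab hac (hto hbj) (hto hcj) (fun w h1 h2 => hto (hleast w (hof h1) (hof h2)))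
  have master : ∀ S : Finset A, (∀ x ∈ S, ∀ y ∈ S, compat x y) →
      ∃ j, isJoin (↑S) j ∧ ∀ z, (∀ s ∈ S, compat z s) → compat z j := by
    intro S
    induction S using Finset.induction_on with
    | empty =>
      intro _
      refine ⟨zero, ⟨by simp, fun u _ => hof (D.zlz u)⟩, fun z _ => ?_⟩
      show D.rest z D.zero = D.rest D.zero z
      rw [D.r0r, D.r0l]
    | @insert a S haS IH =>
      intro hpc
      obtain ⟨j, hj, hcomp⟩ := IH (fun x hx y hy =>
        hpc x (Finset.mem_insert_of_mem hx) y (Finset.mem_insert_of_mem hy))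
      have haj : compat a j := hcomp a (fun s hs =>
        hpc a (Finset.mem_insert_self a S) s (Finset.mem_insert_of_mem hs))
      obtain ⟨j', hJ⟩ := hbin a j haj
      have haj' : le a j' := hJ.1 a (Set.mem_insert a {j})
      have hjj' : le j j' := hJ.1 j (Set.mem_insert_of_mem a rfl)
      have hleast' : ∀ u, le a u → le j u → le j' u := by
        intro u h1 h2
        refine hJ.2 u (fun s hs => ?_)
        rcases hs with rfl | hs
        · exact h1
        · rw [hs]; exact h2
      refine ⟨j', ⟨?_, ?_⟩, ?_⟩
      · intro s hs
        rw [Finset.coe_insert, Set.mem_insert_iff] at hs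
        rcases hs with rfl | hs
        · exact haj'
        · exact hof (D.lz_trans (hto (hj.1 s hs)) (hto hjj'))
      · intro u hu
        refine hleast' u (hu a ?_) (hj.2 u (fun s hs => hu s ?_))
        · rw [Finset.coe_insert]; exact Set.mem_insert a _
        · rw [Finset.coe_insert]
          exact Set.mem_insert_of_mem a hs
      · intro z hz
        have hza : compat z a := hz a (Finset.mem_insert_self a S)
        have hzj : compat z j := hcomp z (fun s hs => hz s (Finset.mem_insert_of_mem hs))
        exact hcore z a j j' hza hzj haj' hjj' hleast'
  constructor
  · intro S hS
    obtain ⟨j, hj, _⟩ := master S hS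
    exact ⟨j, hj⟩
  · intro a₁ a₂ a₃ j h12 h23 h13 hJ
    have h2j : le a₂ j := hJ.1 a₂ (Set.mem_insert a₂ {a₃})
    have h3j : le a₃ j := hJ.1 a₃ (Set.mem_insert_of_mem a₂ rfl)
    have hleast : ∀ u, le a₂ u → le a₃ u → le j u := by
      intro u hb hc
      refine hJ.2 u (fun s hs => ?_)
      rcases hs with rfl | hs
      · exact hb
      · rw [hs]; exact hc
    exact hcore a₁ a₂ a₃ j h12 h13 h2j h3j hleast
end

section
/- Let P be a collection of partial functions from X to Y ordered by inclusion, with the relation C defined by f C g iff f and g agree on dom(f) ∩ dom(g). Then C is reflexive, symmetric, and downward closed (f' ⊆ f, g' ⊆ g, f C g imply f' C g'). Conversely, these three properties axiomatise such relations: any poset with a reflexive, symmetric, downward-closed binary relation embeds (as a poset with relation) into a poset of partial functions with the agreement relation. -/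
universe u

def IsPFun {X Y : Type*} (f : Set (X × Y)) : Prop :=
  ∀ ⦃x : X⦄ ⦃y z : Y⦄, (x, y) ∈ f → (x, z) ∈ f → y = z

/-- `f` and `g` agree on the intersection of their domains. -/
def Agree {X Y : Type*} (f g : Set (X × Y)) : Prop :=
  ∀ ⦃x : X⦄ ⦃y z : Y⦄, (x, y) ∈ f → (x, z) ∈ g → y = z

theorem compatibility_characterisation :
    -- the agreement relation on partial functions is reflexive, symmetric,
    -- and downward closed
    (∀ (X Y : Type u) (f g f' g' : Set (X × Y)),
      IsPFun f → IsPFun g → IsPFun f' → IsPFun g' →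
      (Agree f f) ∧
      (Agree f g → Agree g f) ∧
      (f' ⊆ f → g' ⊆ g → Agree f g → Agree f' g')) ∧
    -- conversely, any poset with a reflexive, symmetric, downward-closed relation
    -- is isomorphic to a poset of partial functions with the agreement relation
    (∀ (P : Type u) [inst : PartialOrder P] (C : P → P → Prop),
      (∀ p, C p p) →
      (∀ p q, C p q → C q p) →
      (∀ p q p' q', p' ≤ p → q' ≤ q → C p q → C p' q') →
      ∃ (X Y : Type u) (e : P → Set (X × Y)),
        (∀ p, IsPFun (e p)) ∧
        (∀ p q, p ≤ q ↔ e p ⊆ e q) ∧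
        (∀ p q, C p q ↔ Agree (e p) (e q))) := by
  constructor
  · intro X Y f g f' g' hf _ _ _
    refine ⟨hf, fun h x y z hy hz => (h hz hy).symm, ?_⟩
    intro hf' hg' h x y z hy hz
    exact h (hf' hy) (hg' hz)
  · intro P _ C hrefl hsymm hdown
    refine ⟨P, ULift Bool, fun p => {rb | (rb.2 = ⟨true⟩ ∧ rb.1 ≤ p) ∨
      (rb.2 = ⟨false⟩ ∧ ¬ C rb.1 p)}, ?_, ?_, ?_⟩
    · intro p x y z hy hz
      rcases hy with ⟨hy, h1⟩ | ⟨hy, h1⟩ <;> rcases hz with ⟨hz, h2⟩ | ⟨hz, h2⟩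
      · exact hy.trans hz.symm
      · exact absurd (hdown p p x p h1 le_rfl (hrefl p)) h2
      · exact absurd (hdown p p x p h2 le_rfl (hrefl p)) h1
      · exact hy.trans hz.symm
    · intro p q
      constructor
      · rintro hpq ⟨x, y⟩ (⟨hy, h1⟩ | ⟨hy, h1⟩)
        · exact Or.inl ⟨hy, h1.trans hpq⟩
        · exact Or.inr ⟨hy, fun h => h1 (hsymm _ _ (hdown q x p x hpq le_rfl (hsymm _ _ h)))⟩
      · intro h
        have := h (show ((p, (⟨true⟩ : ULift Bool)) ∈ _) from Or.inl ⟨rfl, le_rfl⟩)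
        rcases this with ⟨_, h1⟩ | ⟨hc, _⟩
        · exact h1
        · simpa using congrArg ULift.down hc
    · intro p q
      constructor
      · intro hc x y z hy hz
        rcases hy with ⟨hy, h1⟩ | ⟨hy, h1⟩ <;> rcases hz with ⟨hz, h2⟩ | ⟨hz, h2⟩
        · exact hy.trans hz.symm
        · exact absurd (hdown p q x q h1 le_rfl hc) h2
        · exact absurd (hdown q p x p h2 le_rfl (hsymm _ _ hc)) h1
        · exact hy.trans hz.symm
      · intro h
        by_contra hc
        have := h (show ((p, (⟨true⟩ : ULift Bool)) ∈ _) from Or.inl ⟨rfl, le_rfl⟩)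
          (show ((p, (⟨false⟩ : ULift Bool)) ∈ _) from Or.inr ⟨rfl, hc⟩)
        simpa using congrArg ULift.down this
end

section
/- Let π : X → X₀ be a Hausdorff étale space and suppose U, V are compact open subsets of X on which π is injective and which are compatible in the sense that π is injective on U ∪ V. Then U ∪ V is a compact open subset on which π is injective, and it is the least upper bound of U and V in the poset KO(π) ordered by inclusion. Consequently KO(π) is finitarily compatibly complete. -/
/-- `KO π`: compact open subsets on which `π` is injective. -/
def KO {X X₀ : Type*} [TopologicalSpace X] (π : X → X₀) (U : Set X) : Prop :=
  IsCompact U ∧ IsOpen U ∧ Set.InjOn π U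

theorem ko_compatible_union {X X₀ : Type*}
    [TopologicalSpace X] [TopologicalSpace X₀] [T2Space X]
    (π : X → X₀) (hπ : IsLocalHomeomorph π) (hsurj : Function.Surjective π) :
    (∀ U V : Set X, KO π U → KO π V → Set.InjOn π (U ∪ V) →
      (KO π (U ∪ V) ∧
        U ⊆ U ∪ V ∧ V ⊆ U ∪ V ∧
        ∀ W : Set X, KO π W → U ⊆ W → V ⊆ W → U ∪ V ⊆ W)) ∧
    -- consequently KO(π) is finitarily compatibly complete
    (∀ S : Finset (Set X), (∀ U ∈ S, KO π U) →
      (∀ U ∈ S, ∀ V ∈ S, Set.InjOn π (U ∪ V)) →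
      ∃ J : Set X, KO π J ∧ (∀ U ∈ S, U ⊆ J) ∧
        ∀ W : Set X, KO π W → (∀ U ∈ S, U ⊆ W) → J ⊆ W) := by
  constructor
  · intro U V hU hV hinj
    refine ⟨⟨hU.1.union hV.1, hU.2.1.union hV.2.1, hinj⟩, Set.subset_union_left,
      Set.subset_union_right, fun W _ hUW hVW => Set.union_subset hUW hVW⟩
  · intro S hKO hpair
    refine ⟨⋃₀ ↑S, ⟨?_, ?_, ?_⟩, fun U hU => Set.subset_sUnion_of_mem hU, ?_⟩
    · exact (S.finite_toSet).isCompact_sUnion (fun U hU => (hKO U (by exact_mod_cast hU)).1)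
    · exact isOpen_sUnion (fun U hU => (hKO U (by exact_mod_cast hU)).2.1)
    · rintro x ⟨U, hU, hxU⟩ y ⟨V, hV, hyV⟩ hxy
      exact hpair U (by exact_mod_cast hU) V (by exact_mod_cast hV)
        (Or.inl hxU) (Or.inr hyV) hxy
    · intro W _ hW
      exact Set.sUnion_subset fun U hU => hW U (by exact_mod_cast hU)
end
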